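/- (Minimal support condition) A point A ∈ 𝒞 is an extreme point of 𝒞 if and only if for every B ∈ 𝒞, the condition that the range of B i is contained in the range of A i for all i ∈ I implies B = A. -/

import Mathlib

open ContinuousLinearMap

/-- The linear map `L(A) = (1/|G|) · Σ_{i ∈ I} Σ_{g ∈ G} (U g) ∘ (A i) ∘ (U g)†`
associated to a family of operators `A : I → (H →L[ℂ] H)`. -/
noncomputable def Lmap {H : Type*} [NormedAddCommGroup H] [InnerProductSpace ℂ H]
    [FiniteDimensional ℂ H] {G : Type*} [Group G] [Fintype G] {I : Type*} [Fintype I]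
    (U : G → (H →L[ℂ] H)) (A : I → (H →L[ℂ] H)) : H →L[ℂ] H :=
  (Fintype.card G : ℂ)⁻¹ •
    ∑ i : I, ∑ g : G, U g ∘L A i ∘L ContinuousLinearMap.adjoint (U g)

/-- The convex set `𝒞` of block operators corresponding to covariant POVMs with
outcome space `I × G`: families `A` with every `A i` positive semidefinite and `L(A) = 1`. -/
def covSet {H : Type*} [NormedAddCommGroup H] [InnerProductSpace ℂ H]
    [FiniteDimensional ℂ H] {G : Type*} [Group G] [Fintype G] {I : Type*} [Fintype I]
    (U : G → (H →L[ℂ] H)) : Set (I → (H →L[ℂ] H)) :=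
  {A | (∀ i, (A i).IsPositive) ∧ Lmap U A = 1}

/-! For positive operators on a finite-dimensional space, `ker A ≤ ker B` forces `B ≤ c • A` for
all large `c`, because `A` is bounded below on its range `(ker A)ᗮ`. So if `A ∈ 𝒞` and `B ∈ 𝒞` has
ranges inside those of `A`, then for some `c > 1` the family `A' = (c - 1)⁻¹ • (c • A - B)` is
positive, satisfies the same affine constraint `L(A') = 1`, and `A = c⁻¹ • B + (1 - c⁻¹) • A'`;
extremality then gives `B = A`. Conversely, if `A = a • x₁ + b • x₂` with `x₁, x₂ ∈ 𝒞` and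
`a, b > 0`, then `a • x₁ ≤ A`, so `x₁` has ranges inside those of `A` and minimality gives
`x₁ = A`. -/

open RCLike Filter
open scoped InnerProductSpace

theorem LinearMap.IsSymmetric.inner_map_add_self_of_map_eq_zero {𝕜 E : Type*} [RCLike 𝕜]
    [NormedAddCommGroup E] [InnerProductSpace 𝕜 E] {T : E →ₗ[𝕜] E} (hT : T.IsSymmetric) (v : E)
    {u : E} (hu : T u = 0) : ⟪T (v + u), v + u⟫_𝕜 = ⟪T v, v⟫_𝕜 := by
  have : ⟪T v, u⟫_𝕜 = 0 := by rw [hT, hu, inner_zero_right]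
  simp [hu, inner_add_right, this]

section PositiveOperators

variable {H : Type*} [NormedAddCommGroup H] [InnerProductSpace ℂ H]

namespace ContinuousLinearMap

theorem IsPositive.apply_eq_zero_of_re_inner_self_eq_zero [CompleteSpace H] {T : H →L[ℂ] H}
    (hT : T.IsPositive) {x : H} (hx : re ⟪T x, x⟫_ℂ = 0) : T x = 0 := by
  obtain ⟨S, rfl⟩ := CStarAlgebra.nonneg_iff_eq_star_mul_self.mp ((nonneg_iff_isPositive T).mpr hT)
  have hSx : S x = 0 := by
    rw [star_eq_adjoint, mul_def, comp_apply, adjoint_inner_left, inner_self_eq_norm_sq] at hx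
    simpa using hx
  simp [hSx]

theorem IsPositive.ker_le_ker_of_le [CompleteSpace H] {P Q : H →L[ℂ] H} (hP : P.IsPositive)
    (hPQ : P ≤ Q) : Q.ker ≤ P.ker := by
  intro x hx
  rw [LinearMap.mem_ker, coe_coe] at hx ⊢
  refine hP.apply_eq_zero_of_re_inner_self_eq_zero (le_antisymm ?_ (hP.re_inner_nonneg_left x))
  simpa [inner_sub_left, hx] using hPQ.re_inner_nonneg_left x

theorem IsPositive.ker_le_ker_of_mem_openSegment [CompleteSpace H] {P Q T : H →L[ℂ] H}
    (hP : P.IsPositive) (hQ : Q.IsPositive) (hT : T ∈ openSegment ℝ P Q) : T.ker ≤ P.ker := by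
  obtain ⟨a, b, ha, hb, -, rfl⟩ := hT
  have haP : (a • P).IsPositive :=
    (nonneg_iff_isPositive _).mp (smul_nonneg ha.le ((nonneg_iff_isPositive _).mpr hP))
  have hle : a • P ≤ a • P + b • Q :=
    le_add_of_nonneg_right (smul_nonneg hb.le ((nonneg_iff_isPositive _).mpr hQ))
  intro x hx
  simpa [ha.ne'] using haP.ker_le_ker_of_le hle hx

theorem IsPositive.exists_pos_mul_norm_sq_le_of_mem_range [FiniteDimensional ℂ H]
    {T : H →L[ℂ] H} (hT : T.IsPositive) :
    ∃ μ > 0, ∀ v ∈ T.range, μ * ‖v‖ ^ 2 ≤ re ⟪T v, v⟫_ℂ := by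
  have hK : IsCompact (Metric.sphere (0 : H) 1 ∩ T.range) :=
    (isCompact_sphere 0 1).inter_right (Submodule.closed_of_finiteDimensional _)
  have hpos : ∀ v ∈ Metric.sphere (0 : H) 1 ∩ T.range, 0 < T.reApplyInnerSelf v := by
    rintro v ⟨hv1, hvT⟩
    refine (hT.2 v).lt_of_ne fun h0 => ?_
    have hker : v ∈ T.rangeᗮ := by
      rw [hT.isSymmetric.orthogonal_range]
      exact hT.apply_eq_zero_of_re_inner_self_eq_zero h0.symm
    have hv0 : v = 0 := inner_self_eq_zero.mp (Submodule.inner_right_of_mem_orthogonal hvT hker)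
    simp [hv0] at hv1
  obtain ⟨μ, hμ, hμK⟩ := hK.exists_forall_le' T.reApplyInnerSelf_continuous.continuousOn hpos
  refine ⟨μ, hμ, fun v hv => ?_⟩
  rcases eq_or_ne v 0 with rfl | hv0
  · simp
  have hscaled := hμK ((‖v‖⁻¹ : ℂ) • v) ⟨by simp [norm_smul, hv0], T.range.smul_mem _ hv⟩
  rw [T.reApplyInnerSelf_smul, reApplyInnerSelf_apply, norm_inv, Complex.norm_real, norm_norm,
    inv_pow, le_inv_mul_iff₀ (by positivity)] at hscaled
  linarith

theorem IsPositive.eventually_le_smul_of_ker_le_ker [FiniteDimensional ℂ H] {A B : H →L[ℂ] H}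
    (hA : A.IsPositive) (hB : IsSelfAdjoint B) (hAB : A.ker ≤ B.ker) :
    ∀ᶠ c : ℝ in atTop, B ≤ c • A := by
  obtain ⟨μ, hμ, hμA⟩ := hA.exists_pos_mul_norm_sq_le_of_mem_range
  filter_upwards [eventually_ge_atTop (‖B‖ / μ)] with c hc
  have hsymm : (c • A - B).IsSymmetric :=
    ((IsSelfAdjoint.all c).smul hA.isSelfAdjoint).sub hB |>.isSymmetric
  refine ⟨hsymm, fun x => ?_⟩
  obtain ⟨v, hv, u, hu, rfl⟩ := Submodule.exists_add_mem_mem_orthogonal (K := A.range) x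
  rw [hA.isSymmetric.orthogonal_range] at hu
  have hAu : A u = 0 := hu
  have hBu : B u = 0 := hAB hu
  rw [reApplyInnerSelf_apply, ← coe_coe,
    hsymm.inner_map_add_self_of_map_eq_zero v (by simp [hAu, hBu]), coe_coe, sub_apply,
    smul_apply, inner_sub_left, map_sub, real_smul_eq_coe_smul (K := ℂ), inner_smul_real_left,
    real_smul_eq_coe_smul (K := ℂ), smul_eq_mul, re_ofReal_mul, sub_nonneg]
  have hc0 : 0 ≤ c := (div_nonneg (norm_nonneg B) hμ.le).trans hc
  calc re ⟪B v, v⟫_ℂ ≤ ‖B v‖ * ‖v‖ := re_inner_le_norm _ _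
    _ ≤ ‖B‖ * ‖v‖ * ‖v‖ := by gcongr; exact B.le_opNorm v
    _ = ‖B‖ * ‖v‖ ^ 2 := by ring
    _ ≤ c * μ * ‖v‖ ^ 2 := by gcongr; exact (div_le_iff₀ hμ).mp hc
    _ ≤ c * re ⟪A v, v⟫_ℂ := by rw [mul_assoc]; gcongr; exact hμA v hv

end ContinuousLinearMap

variable {ι F : Type*} [AddCommGroup F] [Module ℝ F]

def positiveFiber (Φ : (ι → H →L[ℂ] H) →ₗ[ℝ] F) (y : F) : Set (ι → H →L[ℂ] H) :=
  {A | (∀ i, (A i).IsPositive) ∧ Φ A = y}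

theorem mem_extremePoints_positiveFiber_iff [FiniteDimensional ℂ H] [Finite ι] (Φ : (ι → H →L[ℂ] H) →ₗ[ℝ] F) (y : F)
    {A : ι → H →L[ℂ] H} (hA : A ∈ positiveFiber Φ y) :
    A ∈ (positiveFiber Φ y).extremePoints ℝ ↔
      ∀ B ∈ positiveFiber Φ y, (∀ i, (A i).ker ≤ (B i).ker) → B = A := by
  constructor
  · rintro hext B hB hker
    obtain ⟨c, hc1, hBc⟩ : ∃ c : ℝ, 1 < c ∧ ∀ i, B i ≤ c • A i :=
      ((eventually_gt_atTop 1).and (eventually_all.mpr fun i =>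
        (hA.1 i).eventually_le_smul_of_ker_le_ker (hB.1 i).isSelfAdjoint (hker i))).exists
    have hc0 : 0 < c := zero_lt_one.trans hc1
    have hc1' : 0 < c - 1 := sub_pos.mpr hc1
    set A' := (c - 1)⁻¹ • (c • A - B)
    have hA' : A' ∈ positiveFiber Φ y := by
      refine ⟨fun i => (nonneg_iff_isPositive _).mp
        (smul_nonneg (inv_nonneg.mpr hc1'.le) (sub_nonneg.mpr (hBc i))), ?_⟩
      simp only [A', map_smul, map_sub, hA.2, hB.2]
      match_scalars
      field_simp [hc1'.ne']
    refine hext.2 hB hA'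
      ⟨c⁻¹, 1 - c⁻¹, inv_pos.mpr hc0, sub_pos.mpr (inv_lt_one_of_one_lt₀ hc1), by ring, ?_⟩
    simp only [A']
    match_scalars <;> field_simp [hc0.ne', hc1'.ne']
    ring
  · refine fun hmin => ⟨hA, fun B hB B' hB' hseg => hmin B hB fun i => ?_⟩
    obtain ⟨a, b, ha, hb, hab, rfl⟩ := hseg
    exact (hB.1 i).ker_le_ker_of_mem_openSegment (hB'.1 i) ⟨a, b, ha, hb, hab, rfl⟩

end PositiveOperators

noncomputable def Lmapₗ {H : Type*} [NormedAddCommGroup H] [InnerProductSpace ℂ H]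
    [FiniteDimensional ℂ H] {G : Type*} [Group G] [Fintype G] {I : Type*} [Fintype I]
    (U : G → (H →L[ℂ] H)) : (I → H →L[ℂ] H) →ₗ[ℂ] H →L[ℂ] H where
  toFun := Lmap U
  map_add' A B := by
    simp only [Lmap, Pi.add_apply, comp_add, add_comp, Finset.sum_add_distrib, smul_add]
  map_smul' c A := by
    simp only [Lmap, Pi.smul_apply, comp_smul, smul_comp, ← Finset.smul_sum, RingHom.id_apply,
      smul_comm c]

theorem extremePoint_iff_minimal_support
    {H : Type*} [NormedAddCommGroup H] [InnerProductSpace ℂ H] [FiniteDimensional ℂ H]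
    {G : Type*} [Group G] [Fintype G] {I : Type*} [Fintype I]
    (U : G → (H →L[ℂ] H))
    (A : I → (H →L[ℂ] H)) (hA : A ∈ covSet U) :
    A ∈ Set.extremePoints ℝ (covSet U) ↔
      ∀ B ∈ covSet U,
        (∀ i, LinearMap.range (B i : H →ₗ[ℂ] H) ≤ LinearMap.range (A i : H →ₗ[ℂ] H)) → B = A := by
  refine (mem_extremePoints_positiveFiber_iff ((Lmapₗ U).restrictScalars ℝ) 1 hA).trans
    (forall₂_congr fun B hB => ?_)
  simp only [ker_le_ker_iff_range_le_range (hB.1 _).isSymmetric (hA.1 _).isSymmetric]
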